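/- For any traffic load ρ with 0 < ρ < 1, any arrival rate λ > 0, and any bounded flow size distribution with density f supported on [0, h] with second moment m₂(h) = ∫₀^h t² f(t) dt > 0, it is false that the expected completion time of every flow under ideal SRPT is strictly smaller than under FCFS. In particular, the flow of the maximal size h satisfies E[T(h)]_FCFS ≤ E[T(h)]_{SRPT-Ideal}: since λ·ρ·m₂(h)/(2(1−ρ)²) > 0 and E[R(h)]_FCFS ≤ E[R(h)]_{SRPT-Ideal}, the inequality E[T(h)]_{SRPT-Ideal} < E[T(h)]_FCFS fails for the largest flow. -/
import Mathlib


open intervalIntegral MeasureTheory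

/-- Proposition 3: for any load `0 < ρ < 1`, arrival rate `λ > 0`, and
bounded flow-size distribution on `[0,h]` with positive second moment, it is false
that every flow has strictly smaller expected completion time under ideal SRPT than
under FCFS; in particular, the largest flow `h` satisfies
`E[T(h)]_FCFS ≤ E[T(h)]_SRPT-Ideal`. -/
theorem fcfs_beats_srpt_for_largest_flow
    (lam rho h : ℝ) (f F rhof : ℝ → ℝ)
    (hlam : 0 < lam) (hrho0 : 0 < rho) (hrho1 : rho < 1) (hh : 0 < h)
    -- cumulative load and CDF definitions
    (hrhof : ∀ x : ℝ, rhof x = lam * ∫ t in (0:ℝ)..x, t * f t)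
    (hF : ∀ x : ℝ, F x = ∫ t in (0:ℝ)..x, f t)
    -- total load and total probability at the maximal size h
    (hrhoh : rhof h = rho) (hFh : F h = 1)
    -- positive second moment m₂(h) = ∫₀^h t² f(t) dt
    (hm2 : 0 < ∫ t in (0:ℝ)..h, t ^ 2 * f t)
    -- SRPT-Ideal residence time of the largest flow is at least its FCFS residence time h
    (hres : h ≤ ∫ t in (0:ℝ)..h, 1 / (1 - rhof t)) :
    -- FCFS expected completion time of a size-x flow
    (let TFCFS : ℝ → ℝ := fun x =>
      lam * (∫ t in (0:ℝ)..h, t ^ 2 * f t) / (2 * (1 - rho)) + x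
    -- SRPT-Ideal expected completion time of a size-x flow
    let TSRPT : ℝ → ℝ := fun x =>
      lam * ((∫ t in (0:ℝ)..x, t ^ 2 * f t) + x ^ 2 * (1 - F x)) /
        (2 * (1 - rhof x) ^ 2) + ∫ t in (0:ℝ)..x, 1 / (1 - rhof t)
    TFCFS h ≤ TSRPT h ∧ ¬ (∀ x ∈ Set.Icc (0:ℝ) h, TSRPT x < TFCFS x)) := by
  intro TFCFS TSRPT
  have h1ρ : (0:ℝ) < 1 - rho := by linarith
  have key : TFCFS h ≤ TSRPT h := by
    show lam * (∫ t in (0:ℝ)..h, t ^ 2 * f t) / (2 * (1 - rho)) + h ≤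
        lam * ((∫ t in (0:ℝ)..h, t ^ 2 * f t) + h ^ 2 * (1 - F h)) /
          (2 * (1 - rhof h) ^ 2) + ∫ t in (0:ℝ)..h, 1 / (1 - rhof t)
    rw [hFh, hrhoh]
    have h2 : lam * (∫ t in (0:ℝ)..h, t ^ 2 * f t) / (2 * (1 - rho)) ≤
        lam * ((∫ t in (0:ℝ)..h, t ^ 2 * f t) + h ^ 2 * (1 - 1)) / (2 * (1 - rho) ^ 2) := by
      rw [show (1:ℝ) - 1 = 0 by ring, mul_zero, add_zero]
      apply div_le_div_of_nonneg_left (by positivity) (by positivity)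
      nlinarith
    linarith
  refine ⟨key, fun hall => ?_⟩
  exact absurd (hall h ⟨le_of_lt hh, le_refl h⟩) (not_lt.mpr key)
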